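/- arXiv:1511.04036 — 3 statements merged into one kernel-verified Lean document; each statement's English description precedes it below -/
import Mathlib

section
/- Let S₀ and S₁ be finite nonempty point sets whose convex hulls are disjoint. Then there exist p ∈ S₀ and q ∈ S₁ such that S₀ ⊆ LHP(p,q) and S₁ ⊆ RHP(p,q), i.e., a separating common tangent through a point of each set exists. -/
noncomputable def perp (x : ℝ × ℝ) : ℝ × ℝ := (-x.2, x.1)

noncomputable def dotp (x y : ℝ × ℝ) : ℝ := x.1 * y.1 + x.2 * y.2

noncomputable def Tor (a b c : ℝ × ℝ) : ℝ := Real.sign (dotp (perp (b - a)) (c - b))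

/-!
Separate the two hulls by a line with normal `U`, so that every segment `q - p` from `S₀` to `S₁`
points into the half-plane `0 < U ⬝ x`. Among these finitely many directions take the one of
largest slope `(U⊥ ⬝ x) / (U ⬝ x)`: every other segment turns clockwise from it, which is exactly
the tangency condition for the extremal pair `(p, q)`.
-/

lemma Real.sign_nonneg_of_nonneg {x : ℝ} (h : 0 ≤ x) : 0 ≤ Real.sign x := by
  rcases h.eq_or_lt with rfl | h
  · simp
  · simp [Real.sign_of_pos h]

lemma Real.sign_nonpos_of_nonpos {x : ℝ} (h : x ≤ 0) : Real.sign x ≤ 0 := by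
  rcases h.eq_or_lt with rfl | h
  · simp
  · simp [Real.sign_of_neg h]

lemma LinearMap.exists_eq_dotp (f : ℝ × ℝ →ₗ[ℝ] ℝ) : ∃ U, ∀ x, f x = dotp U x := by
  refine ⟨(f (1, 0), f (0, 1)), fun x => ?_⟩
  have hx : x = x.1 • ((1 : ℝ), (0 : ℝ)) + x.2 • ((0 : ℝ), (1 : ℝ)) := by ext <;> simp
  rw [hx, map_add, map_smul, map_smul]
  simp only [dotp, smul_eq_mul, Prod.fst_add, Prod.snd_add, Prod.smul_fst, Prod.smul_snd]
  ring

lemma exists_dotp_lt_of_disjoint_convexHull {S₀ S₁ : Set (ℝ × ℝ)} (h₀ : S₀.Finite)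
    (h₁ : S₁.Finite) (h : Disjoint (convexHull ℝ S₀) (convexHull ℝ S₁)) :
    ∃ U, ∀ p ∈ S₀, ∀ q ∈ S₁, dotp U p < dotp U q := by
  obtain ⟨f, a, b, hfa, hab, hfb⟩ :=
    geometric_hahn_banach_compact_closed (convex_convexHull ℝ S₀) (h₀.isCompact_convexHull ℝ)
      (convex_convexHull ℝ S₁) (h₁.isCompact_convexHull ℝ).isClosed h
  obtain ⟨U, hU⟩ := LinearMap.exists_eq_dotp f.toLinearMap
  refine ⟨U, fun p hp q hq => ?_⟩
  rw [← hU, ← hU]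
  exact ((hfa p (subset_convexHull ℝ S₀ hp)).trans hab).trans (hfb q (subset_convexHull ℝ S₁ hq))

lemma dotp_sub_right (x y z : ℝ × ℝ) : dotp x (y - z) = dotp x y - dotp x z := by
  simp only [dotp, Prod.fst_sub, Prod.snd_sub]
  ring

lemma dotp_perp_self (x : ℝ × ℝ) : dotp (perp x) x = 0 := by
  simp only [dotp, perp]
  ring

/-- A Lagrange-type identity: the cross product of `d` and `e` is the cross product of their
coordinate vectors in the frame `(U, U⊥)`, scaled by `‖U‖²`. -/
lemma dotp_mul_dotp_perp_sub (U d e : ℝ × ℝ) :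
    dotp U d * dotp (perp U) e - dotp (perp U) d * dotp U e
      = (U.1 ^ 2 + U.2 ^ 2) * dotp (perp d) e := by
  simp only [dotp, perp]
  ring

lemma dotp_perp_nonpos_of_div_le {U d e : ℝ × ℝ} (hd : 0 < dotp U d) (he : 0 < dotp U e)
    (h : dotp (perp U) e / dotp U e ≤ dotp (perp U) d / dotp U d) :
    dotp (perp d) e ≤ 0 := by
  rw [div_le_div_iff₀ he hd] at h
  have hU : 0 < U.1 ^ 2 + U.2 ^ 2 := by
    by_contra! hU
    have h1 : U.1 = 0 := by nlinarith [sq_nonneg U.1, sq_nonneg U.2]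
    have h2 : U.2 = 0 := by nlinarith [sq_nonneg U.1, sq_nonneg U.2]
    simp [dotp, h1, h2] at hd
  have := dotp_mul_dotp_perp_sub U d e
  nlinarith

lemma Tor_nonneg_of_dotp_perp_sub_nonpos {a b c : ℝ × ℝ}
    (h : dotp (perp (b - a)) (b - c) ≤ 0) : 0 ≤ Tor a b c := by
  apply Real.sign_nonneg_of_nonneg
  rw [dotp_sub_right] at h ⊢
  linarith

lemma Tor_nonpos_of_dotp_perp_sub_nonpos {a b c : ℝ × ℝ}
    (h : dotp (perp (b - a)) (c - a) ≤ 0) : Tor a b c ≤ 0 := by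
  apply Real.sign_nonpos_of_nonpos
  have := dotp_perp_self (b - a)
  rw [dotp_sub_right] at h this ⊢
  linarith

theorem stmt13_general (S₀ S₁ : Set (ℝ × ℝ)) (h₀fin : S₀.Finite) (h₁fin : S₁.Finite)
    (h₀ne : S₀.Nonempty) (h₁ne : S₁.Nonempty)
    (hdisj : convexHull ℝ S₀ ∩ convexHull ℝ S₁ = ∅) :
    ∃ p ∈ S₀, ∃ q ∈ S₁,
      S₀ ⊆ {c | 0 ≤ Tor p q c} ∧ S₁ ⊆ {c | Tor p q c ≤ 0} := by
  obtain ⟨U, hU⟩ := exists_dotp_lt_of_disjoint_convexHull h₀fin h₁fin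
    (Set.disjoint_iff_inter_eq_empty.mpr hdisj)
  have hpos : ∀ p ∈ S₀, ∀ q ∈ S₁, 0 < dotp U (q - p) := fun p hp q hq => by
    rw [dotp_sub_right]
    linarith [hU p hp q hq]
  obtain ⟨⟨p, q⟩, ⟨hp, hq⟩, hmax⟩ := Set.exists_max_image (S₀ ×ˢ S₁)
    (fun pq => dotp (perp U) (pq.2 - pq.1) / dotp U (pq.2 - pq.1)) (h₀fin.prod h₁fin)
    (h₀ne.prod h₁ne)
  have htangent : ∀ p' ∈ S₀, ∀ q' ∈ S₁, dotp (perp (q - p)) (q' - p') ≤ 0 :=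
    fun p' hp' q' hq' => dotp_perp_nonpos_of_div_le (hpos p hp q hq) (hpos p' hp' q' hq')
      (hmax (p', q') ⟨hp', hq'⟩)
  exact ⟨p, hp, q, hq, fun c hc => Tor_nonneg_of_dotp_perp_sub_nonpos (htangent c hc q hq),
    fun c hc => Tor_nonpos_of_dotp_perp_sub_nonpos (htangent p hp c hc)⟩

theorem stmt13 (S₀ S₁ : Set (ℝ × ℝ)) (h₀fin : S₀.Finite) (h₁fin : S₁.Finite)
    (h₀ne : S₀.Nonempty) (h₁ne : S₁.Nonempty)
    (hdisj : convexHull ℝ S₀ ∩ convexHull ℝ S₁ = ∅)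
    (hSdisj : S₀ ∩ S₁ = ∅)
    (hgp : ∀ x ∈ S₀ ∪ S₁, ∀ y ∈ S₀ ∪ S₁, ∀ z ∈ S₀ ∪ S₁,
      x ≠ y → y ≠ z → x ≠ z → ¬ Collinear ℝ ({x, y, z} : Set (ℝ × ℝ))) :
    ∃ p ∈ S₀, ∃ q ∈ S₁,
      S₀ ⊆ {c | 0 ≤ Tor p q c} ∧ S₁ ⊆ {c | Tor p q c ≤ 0} :=
  stmt13_general S₀ S₁ h₀fin h₁fin h₀ne h₁ne hdisj
end

section
/- If the convex hull of a finite point set S₀ is contained in the interior of the convex hull of a finite point set S₁, then there is no outer common tangent: there exist no p ∈ S₀, q ∈ S₁ with p ≠ q such that S₀ ∪ S₁ ⊆ RHP(p,q). -/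
/-!
A point `p` of the interior of a set `s` can be pushed a little in any direction `v` without
leaving `s`; if a linear functional increases along `v`, then `s` cannot lie on the side
`f ≤ f p`. For an outer common tangent `pq` take `f = dotp (perp (q - p))` and `v = perp (q - p)`:
all of `S₁`, hence its convex hull, lies in `f ≤ f p`, while `p ∈ S₀` is interior to that hull.
-/

theorem not_mem_interior_of_forall_le {E : Type*} [AddCommGroup E] [Module ℝ E]
    [TopologicalSpace E] [ContinuousAdd E] [ContinuousSMul ℝ E]
    (f : E →ₗ[ℝ] ℝ) {v : E} (hv : 0 < f v) {s : Set E} {p : E} (hs : ∀ c ∈ s, f c ≤ f p) :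
    p ∉ interior s := by
  intro hp
  have hpush : Filter.Tendsto (fun t : ℝ => p + t • v) (nhdsWithin 0 (Set.Ioi 0)) (nhds p) := by
    have : Continuous (fun t : ℝ => p + t • v) := by fun_prop
    simpa using (this.tendsto 0).mono_left nhdsWithin_le_nhds
  obtain ⟨t, hts, ht⟩ :=
    ((hpush.eventually (mem_interior_iff_mem_nhds.mp hp)).and self_mem_nhdsWithin).exists
  have := hs _ hts
  rw [map_add, map_smul, smul_eq_mul] at this
  linarith [mul_pos (show (0 : ℝ) < t from ht) hv]

noncomputable def dotpLinear (n : ℝ × ℝ) : ℝ × ℝ →ₗ[ℝ] ℝ where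
  toFun := dotp n
  map_add' x y := by simp only [dotp, Prod.fst_add, Prod.snd_add]; ring
  map_smul' r x := by simp only [dotp, Prod.smul_fst, Prod.smul_snd, smul_eq_mul, RingHom.id_apply]; ring

theorem dotp_self_pos {x : ℝ × ℝ} (hx : x ≠ 0) : 0 < dotp x x := by
  have : x.1 ≠ 0 ∨ x.2 ≠ 0 := by
    by_contra! h
    exact hx (Prod.ext h.1 h.2)
  unfold dotp
  rcases this with h | h
  · nlinarith [mul_self_pos.mpr h, mul_self_nonneg x.2]
  · nlinarith [mul_self_pos.mpr h, mul_self_nonneg x.1]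

theorem perp_ne_zero {x : ℝ × ℝ} (hx : x ≠ 0) : perp x ≠ 0 := by
  intro h
  apply hx
  simp only [perp, Prod.mk_eq_zero, neg_eq_zero] at h
  exact Prod.ext h.2 h.1

theorem Tor_nonpos_iff (a b c : ℝ × ℝ) :
    Tor a b c ≤ 0 ↔ dotp (perp (b - a)) c ≤ dotp (perp (b - a)) a := by
  have hshift : dotp (perp (b - a)) (c - b) = dotp (perp (b - a)) c - dotp (perp (b - a)) a := by
    simp only [dotp, perp, Prod.fst_sub, Prod.snd_sub]; ring
  unfold Tor
  rw [hshift]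
  rcases lt_trichotomy (dotp (perp (b - a)) c - dotp (perp (b - a)) a) 0 with h | h | h
  · simp only [Real.sign_of_neg h]; constructor <;> intro <;> linarith
  · simp only [h, Real.sign_zero]; constructor <;> intro <;> linarith
  · simp only [Real.sign_of_pos h]; constructor <;> intro <;> linarith

theorem stmt15_general (S₀ S₁ : Set (ℝ × ℝ))
    (hsub : convexHull ℝ S₀ ⊆ interior (convexHull ℝ S₁)) :
    ¬ ∃ p ∈ S₀, ∃ q ∈ S₁, p ≠ q ∧ S₀ ∪ S₁ ⊆ {c | Tor p q c ≤ 0} := by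
  rintro ⟨p, hp, q, -, hpq, htangent⟩
  set n := perp (q - p)
  have hhull : ∀ c ∈ convexHull ℝ S₁, dotpLinear n c ≤ dotpLinear n p :=
    convexHull_min (fun c hc => (Tor_nonpos_iff p q c).mp (htangent (Or.inr hc)))
      (convex_halfSpace_le (dotpLinear n).isLinear _)
  exact not_mem_interior_of_forall_le (dotpLinear n)
    (dotp_self_pos (perp_ne_zero (sub_ne_zero.mpr hpq.symm))) hhull
    (hsub (subset_convexHull ℝ S₀ hp))

theorem stmt15 (S₀ S₁ : Set (ℝ × ℝ)) (h₀fin : S₀.Finite) (h₁fin : S₁.Finite)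
    (h₀ne : S₀.Nonempty)
    (hsub : convexHull ℝ S₀ ⊆ interior (convexHull ℝ S₁)) :
    ¬ ∃ p ∈ S₀, ∃ q ∈ S₁, p ≠ q ∧ S₀ ∪ S₁ ⊆ {c | Tor p q c ≤ 0} :=
  stmt15_general S₀ S₁ hsub
end

section
/- Number of iterations bound: let (aᵢ) and (bᵢ) be sequences of natural numbers with a₀ = b₀ = 0, both non-decreasing, such that whenever iteration i performs an update (aᵢ + bᵢ > aᵢ₋₁ + bᵢ₋₁), the increase satisfies aᵢ + bᵢ ≥ aᵢ₋₁ + bᵢ₋₁ + (i - j)/2 where j < i is the previous update iteration (j = 0 if none). If aᵢ ≤ A and bᵢ ≤ B for all i, then the last update occurs at some iteration i ≤ 2(A + B). -/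
/-! Between two consecutive increases of the monotone sum `s = a + b`, at iterations `j < i`,
the sum grows by at least `(i - j) / 2`. Telescoping over all increases up to an increase at
iteration `i` gives `i ≤ 2 s i`, and `s i ≤ A + B`. -/

section LastIncrease

variable {s : ℕ → ℕ}

theorem exists_last_increase_before (hs : Monotone s) {i : ℕ} (hi : 0 < i) :
    ∃ j < i, (j = 0 ∨ s (j - 1) < s j) ∧ ∀ m, j < m → m < i → s (m - 1) = s m := by
  classical
  let P : ℕ → Prop := fun m => m = 0 ∨ s (m - 1) < s m
  have hle : Nat.findGreatest P (i - 1) ≤ i - 1 := Nat.findGreatest_le _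
  refine ⟨Nat.findGreatest P (i - 1), by omega,
    Nat.findGreatest_spec (P := P) (Nat.zero_le _) (Or.inl rfl), fun m hjm hmi => ?_⟩
  have hm : ¬ P m := Nat.findGreatest_is_greatest hjm (by omega)
  simp only [P, not_or, not_lt] at hm
  exact le_antisymm (hs (Nat.sub_le m 1)) hm.2

theorem le_two_mul_of_increase (hs : Monotone s)
    (hgap : ∀ i j, j < i → s (i - 1) < s i → (∀ m, j < m → m < i → s (m - 1) = s m) →
      (j = 0 ∨ s (j - 1) < s j) → 2 * s j + (i - j) ≤ 2 * s i)
    {i : ℕ} (hi : 0 < i) (hinc : s (i - 1) < s i) : i ≤ 2 * s i := by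
  induction i using Nat.strong_induction_on with
  | _ i ih =>
  obtain ⟨j, hji, hj, hconst⟩ := exists_last_increase_before hs hi
  have hstep := hgap i j hji hinc hconst hj
  have hj_le : j ≤ 2 * s j := by
    rcases Nat.eq_zero_or_pos j with rfl | hj0
    · exact Nat.zero_le _
    · exact ih j hji hj0 (hj.resolve_left hj0.ne')
  omega

end LastIncrease

theorem stmt17_general (a b : ℕ → ℕ) (A B : ℕ)
    (hamono : Monotone a) (hbmono : Monotone b)
    (hbound : ∀ i, a i ≤ A ∧ b i ≤ B)
    (hupd : ∀ i j : ℕ, j < i →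
      a (i - 1) + b (i - 1) < a i + b i →
      (∀ m : ℕ, j < m → m < i → a (m - 1) + b (m - 1) = a m + b m) →
      (j = 0 ∨ a (j - 1) + b (j - 1) < a j + b j) →
      2 * (a j + b j) + (i - j) ≤ 2 * (a i + b i)) :
    ∀ i : ℕ, 0 < i → a (i - 1) + b (i - 1) < a i + b i → i ≤ 2 * (A + B) := by
  intro i hi hinc
  have hi_le : i ≤ 2 * (a i + b i) :=
    le_two_mul_of_increase (s := fun n => a n + b n) (hamono.add hbmono) hupd hi hinc
  obtain ⟨haA, hbB⟩ := hbound i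
  omega

theorem stmt17 (a b : ℕ → ℕ) (A B : ℕ)
    (ha0 : a 0 = 0) (hb0 : b 0 = 0) (hamono : Monotone a) (hbmono : Monotone b)
    (hbound : ∀ i, a i ≤ A ∧ b i ≤ B)
    (hupd : ∀ i j : ℕ, j < i →
      a (i - 1) + b (i - 1) < a i + b i →
      (∀ m : ℕ, j < m → m < i → a (m - 1) + b (m - 1) = a m + b m) →
      (j = 0 ∨ a (j - 1) + b (j - 1) < a j + b j) →
      2 * (a j + b j) + (i - j) ≤ 2 * (a i + b i)) :
    ∀ i : ℕ, 0 < i → a (i - 1) + b (i - 1) < a i + b i → i ≤ 2 * (A + B) :=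
  stmt17_general a b A B hamono hbmono hbound hupd
end
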